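/- arXiv:1409.5285 — 2 statements merged into one kernel-verified Lean document; each statement's English description precedes it below -/
import Mathlib

section
/- Let α > 1/2, set γ(α) = α/(2α−1) and z(y,α) = y²(2α−1)/2, and let G(y,α) = y·M(γ(α), 3/2, z(y,α)) + [Γ(γ(α)−1/2) / (√(2(2α−1))·Γ(γ(α)))]·M(γ(α)−1/2, 1/2, z(y,α)). Then for every constant C ∈ ℝ the function f(y) = C·G(y,α) is twice continuously differentiable on ℝ and satisfies f''(y) − (2α−1) y f'(y) − f(y) = 0 for all y ∈ ℝ. -/
open Real Filter Polynomial

/-- Confluent hypergeometric function of the first kind,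
`M(γ,β,z) = ∑ (γ)⁽ⁿ⁾ zⁿ / ((β)⁽ⁿ⁾ n!)`. -/
noncomputable def M (γ β z : ℝ) : ℝ :=
  ∑' n : ℕ, ((ascPochhammer ℝ n).eval γ * z ^ n) /
    ((ascPochhammer ℝ n).eval β * (Nat.factorial n : ℝ))

/-- The candidate solution for `α > 1/2`. -/
noncomputable def G (α y : ℝ) : ℝ :=
  y * M (α / (2 * α - 1)) (3 / 2) (y ^ 2 * (2 * α - 1) / 2) +
    Real.Gamma (α / (2 * α - 1) - 1 / 2) /
      (Real.sqrt (2 * (2 * α - 1)) * Real.Gamma (α / (2 * α - 1))) *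
    M (α / (2 * α - 1) - 1 / 2) (1 / 2) (y ^ 2 * (2 * α - 1) / 2)

/-!
Interleaving the two Kummer series in `y²` writes `C * G α y` as a single power series `∑ cₙ yⁿ`
(even part from `M(γ - 1/2, 1/2, ·)`, odd part from `y M(γ, 3/2, ·)`) whose coefficients satisfy
`(n + 1) (n + 2) c_{n+2} = ((2α - 1) n + 1) c_n`. This recurrence is the coefficientwise form of
`f'' - (2α - 1) y f' - f = 0`; it also gives `|c_{n+2}| r^{n+2} ≤ |c_n| rⁿ / 2` for large `n`, so
the series converges absolutely on all of `ℝ` and can be differentiated termwise.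
-/

open scoped ContDiff

theorem summable_of_ratio_norm_add_two_eventually_le {E : Type*} [NormedAddCommGroup E]
    [CompleteSpace E] {f : ℕ → E} {q : ℝ} (hq : q < 1) (h : ∀ᶠ n in atTop, ‖f (n + 2)‖ ≤ q * ‖f n‖) :
    Summable f := by
  have h2 : Tendsto (fun m : ℕ => 2 * m) atTop atTop :=
    tendsto_id.const_mul_atTop' two_pos
  refine .even_add_odd (summable_of_ratio_norm_eventually_le hq (h2.eventually h))
    (summable_of_ratio_norm_eventually_le hq ?_)
  exact ((tendsto_add_atTop_nat 1).comp h2).eventually h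

def EntireCoeffs (c : ℕ → ℝ) : Prop := ∀ r : ℝ, Summable fun n => |c n| * r ^ n

def derivCoeff (c : ℕ → ℝ) (n : ℕ) : ℝ := (n + 1) * c (n + 1)

namespace EntireCoeffs

variable {c : ℕ → ℝ}

theorem summable_mul_pow (hc : EntireCoeffs c) (y : ℝ) : Summable fun n => c n * y ^ n :=
  .of_norm <| (hc |y|).congr fun n => by
    rw [norm_mul, norm_pow, Real.norm_eq_abs, Real.norm_eq_abs]

theorem derivCoeff (hc : EntireCoeffs c) : EntireCoeffs (_root_.derivCoeff c) := by
  intro r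
  have hR : Summable fun n => |c (n + 1)| * (2 * (|r| + 1)) ^ (n + 1) :=
    (summable_nat_add_iff 1).2 (hc _)
  refine .of_norm_bounded hR fun n => ?_
  have hn : (n : ℝ) + 1 ≤ 2 ^ (n + 1) := by exact_mod_cast (Nat.lt_two_pow_self).le
  have hr : |r| ^ n ≤ (|r| + 1) ^ (n + 1) := by
    calc |r| ^ n ≤ (|r| + 1) ^ n := by gcongr; linarith
      _ ≤ (|r| + 1) ^ (n + 1) := pow_le_pow_right₀ (by linarith [abs_nonneg r]) n.le_succ
  calc ‖|_root_.derivCoeff c n| * r ^ n‖ = ((n : ℝ) + 1) * |c (n + 1)| * |r| ^ n := by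
        simp only [_root_.derivCoeff, norm_mul, norm_pow, Real.norm_eq_abs, abs_abs, abs_mul]
        rw [abs_of_pos (by positivity : (0 : ℝ) < n + 1)]
    _ ≤ 2 ^ (n + 1) * |c (n + 1)| * (|r| + 1) ^ (n + 1) := by gcongr
    _ = |c (n + 1)| * (2 * (|r| + 1)) ^ (n + 1) := by rw [mul_pow]; ring

theorem hasDerivAt_tsum (hc : EntireCoeffs c) (y : ℝ) :
    HasDerivAt (fun z => ∑' n, c n * z ^ n) (∑' n, _root_.derivCoeff c n * y ^ n) y := by
  have hshift : (fun z => ∑' n, c n * z ^ n) = fun z => c 0 + ∑' n, c (n + 1) * z ^ (n + 1) := by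
    funext z
    simpa using (hc.summable_mul_pow z).tsum_eq_zero_add
  have hy : y ∈ Metric.ball (0 : ℝ) (|y| + 1) := by simp
  have hterm : ∀ n (z : ℝ),
      HasDerivAt (fun z => c (n + 1) * z ^ (n + 1)) (_root_.derivCoeff c n * z ^ n) z := by
    intro n z
    refine ((hasDerivAt_pow (n + 1) z).const_mul (c (n + 1))).congr_deriv ?_
    rw [_root_.derivCoeff, Nat.add_sub_cancel]
    push_cast
    ring
  have hbound : ∀ n (z : ℝ), z ∈ Metric.ball (0 : ℝ) (|y| + 1) →
      ‖_root_.derivCoeff c n * z ^ n‖ ≤ |_root_.derivCoeff c n| * (|y| + 1) ^ n := by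
    intro n z hz
    rw [mem_ball_zero_iff, Real.norm_eq_abs] at hz
    rw [norm_mul, norm_pow, Real.norm_eq_abs, Real.norm_eq_abs]
    gcongr
  have h0 : Summable fun n => c (n + 1) * (0 : ℝ) ^ (n + 1) :=
    (summable_nat_add_iff 1).2 (hc.summable_mul_pow 0)
  rw [hshift]
  exact (hasDerivAt_tsum_of_isPreconnected (hc.derivCoeff (|y| + 1)) Metric.isOpen_ball
    (convex_ball 0 _).isPreconnected (fun n z _ => hterm n z) hbound
    (Metric.mem_ball_self (by positivity)) h0 hy).const_add (c 0)

theorem deriv_tsum (hc : EntireCoeffs c) :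
    deriv (fun z => ∑' n, c n * z ^ n) = fun y => ∑' n, _root_.derivCoeff c n * y ^ n :=
  funext fun y => (hc.hasDerivAt_tsum y).deriv

theorem contDiff_tsum (hc : EntireCoeffs c) : ContDiff ℝ ∞ fun z => ∑' n, c n * z ^ n := by
  rw [contDiff_infty]
  intro m
  induction m generalizing c with
  | zero =>
    exact contDiff_zero.2 <| continuous_iff_continuousAt.2 fun y =>
      (hc.hasDerivAt_tsum y).continuousAt
  | succ m ih =>
    rw [Nat.cast_succ, contDiff_succ_iff_deriv, hc.deriv_tsum]
    exact ⟨fun y => (hc.hasDerivAt_tsum y).differentiableAt, by simp, ih hc.derivCoeff⟩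

end EntireCoeffs

theorem entireCoeffs_of_rec {k : ℝ} {c : ℕ → ℝ}
    (hrec : ∀ n : ℕ, (n + 1) * (n + 2) * c (n + 2) = (k * n + 1) * c n) : EntireCoeffs c := by
  intro r
  refine summable_of_ratio_norm_add_two_eventually_le (q := 1 / 2) (by norm_num) ?_
  filter_upwards [eventually_ge_atTop ⌈2 * (|k| + 1) * r ^ 2⌉₊] with n hn
  have hN : 2 * (|k| + 1) * r ^ 2 ≤ n := Nat.ceil_le.1 hn
  have hpos : (0 : ℝ) < (n + 1) * (n + 2) := by positivity
  have hkn : |k * n + 1| ≤ (|k| + 1) * (n + 1) := by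
    calc |k * n + 1| ≤ |k| * n + 1 := by
          simpa [abs_mul] using abs_add_le (k * n) 1
      _ ≤ (|k| + 1) * (n + 1) := by nlinarith [abs_nonneg k, (n.cast_nonneg : (0 : ℝ) ≤ n)]
  have habs : (n + 1) * (n + 2) * |c (n + 2)| = |k * n + 1| * |c n| := by
    rw [← abs_of_pos hpos, ← abs_mul, hrec, abs_mul]
  have hsq : |r| ^ (n + 2) = r ^ 2 * |r| ^ n := by rw [pow_add, sq_abs, mul_comm]
  simp only [norm_mul, norm_pow, Real.norm_eq_abs, abs_abs]
  refine le_of_mul_le_mul_left ?_ hpos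
  calc (n + 1) * (n + 2) * (|c (n + 2)| * |r| ^ (n + 2))
      = |k * n + 1| * r ^ 2 * (|c n| * |r| ^ n) := by
        rw [hsq]; linear_combination (r ^ 2 * |r| ^ n) * habs
    _ ≤ (|k| + 1) * (n + 1) * r ^ 2 * (|c n| * |r| ^ n) := by gcongr
    _ ≤ (n + 1) * (n + 2) * (1 / 2 * (|c n| * |r| ^ n)) := by
        have : (|k| + 1) * (n + 1) * r ^ 2 ≤ (n + 1) * (n + 2) * (1 / 2) := by nlinarith
        nlinarith [mul_le_mul_of_nonneg_right this (by positivity : 0 ≤ |c n| * |r| ^ n)]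

theorem tsum_mul_pow_ode_of_rec {k : ℝ} {c : ℕ → ℝ}
    (hrec : ∀ n : ℕ, (n + 1) * (n + 2) * c (n + 2) = (k * n + 1) * c n) (y : ℝ) :
    deriv (deriv fun z => ∑' n, c n * z ^ n) y
      - k * y * deriv (fun z => ∑' n, c n * z ^ n) y - ∑' n, c n * y ^ n = 0 := by
  have hc := entireCoeffs_of_rec hrec
  rw [hc.deriv_tsum, hc.derivCoeff.deriv_tsum]
  have h0 : HasSum (fun n => c n * y ^ n) (∑' n, c n * y ^ n) := (hc.summable_mul_pow y).hasSum
  have h1 : HasSum (fun n => k * n * c n * y ^ n) (k * y * ∑' n, derivCoeff c n * y ^ n) := by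
    refine (hasSum_nat_add_iff' 1).1 ?_
    simpa [derivCoeff, pow_succ, mul_assoc, mul_comm, mul_left_comm] using
      ((hc.derivCoeff.summable_mul_pow y).hasSum.mul_left (k * y))
  have h2 : HasSum (fun n => k * n * c n * y ^ n + c n * y ^ n)
      (∑' n, derivCoeff (derivCoeff c) n * y ^ n) := by
    refine (hc.derivCoeff.derivCoeff.summable_mul_pow y).hasSum.congr_fun fun n => ?_
    have := hrec n
    simp only [derivCoeff]
    push_cast
    rw [show n + 1 + 1 = n + 2 from rfl]
    linear_combination (-y ^ n) * this
  beta_reduce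
  rw [h2.unique (h1.add h0)]
  ring

noncomputable def kummerCoeff (a b : ℝ) (n : ℕ) : ℝ :=
  (ascPochhammer ℝ n).eval a / ((ascPochhammer ℝ n).eval b * n.factorial)

theorem M_eq_tsum (a b z : ℝ) : M a b z = ∑' n, kummerCoeff a b n * z ^ n :=
  tsum_congr fun n => by rw [kummerCoeff, div_mul_eq_mul_div]

theorem kummerCoeff_succ (a : ℝ) {b : ℝ} (hb : 0 < b) (n : ℕ) :
    kummerCoeff a b (n + 1) = (a + n) / ((n + 1) * (b + n)) * kummerCoeff a b n := by
  have := ascPochhammer_pos n b hb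
  simp only [kummerCoeff, ascPochhammer_succ_eval, Nat.factorial_succ]
  push_cast
  field_simp

-- The power-series solution of `f'' - k y f' - f = 0` with `f 0 = c₀` and `f' 0 = c₁`.
noncomputable def solCoeff (k c₀ c₁ : ℝ) : ℕ → ℝ
  | 0 => c₀
  | 1 => c₁
  | n + 2 => (k * n + 1) / ((n + 1) * (n + 2)) * solCoeff k c₀ c₁ n

theorem solCoeff_rec (k c₀ c₁ : ℝ) (n : ℕ) :
    (n + 1) * (n + 2) * solCoeff k c₀ c₁ (n + 2) = (k * n + 1) * solCoeff k c₀ c₁ n := by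
  rw [solCoeff]
  field_simp

theorem solCoeff_two_mul {k : ℝ} (hk : k ≠ 0) (c₀ c₁ : ℝ) (m : ℕ) :
    solCoeff k c₀ c₁ (2 * m) = c₀ * kummerCoeff (1 / (2 * k)) (1 / 2) m * (k / 2) ^ m := by
  induction m with
  | zero => simp [solCoeff, kummerCoeff]
  | succ m ih =>
    rw [show 2 * (m + 1) = 2 * m + 2 by ring, solCoeff, ih, kummerCoeff_succ _ (by norm_num)]
    push_cast
    field_simp
    ring

theorem solCoeff_two_mul_add_one {k : ℝ} (hk : k ≠ 0) (c₀ c₁ : ℝ) (m : ℕ) :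
    solCoeff k c₀ c₁ (2 * m + 1) =
      c₁ * kummerCoeff ((k + 1) / (2 * k)) (3 / 2) m * (k / 2) ^ m := by
  induction m with
  | zero => simp [solCoeff, kummerCoeff]
  | succ m ih =>
    rw [show 2 * (m + 1) + 1 = 2 * m + 1 + 2 by ring, solCoeff, ih,
      kummerCoeff_succ _ (by norm_num)]
    push_cast
    field_simp
    ring

theorem tsum_solCoeff_mul_pow {k : ℝ} (hk : k ≠ 0) (c₀ c₁ y : ℝ) :
    ∑' n, solCoeff k c₀ c₁ n * y ^ n =
      c₁ * y * M ((k + 1) / (2 * k)) (3 / 2) (y ^ 2 * k / 2)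
        + c₀ * M (1 / (2 * k)) (1 / 2) (y ^ 2 * k / 2) := by
  have hs := (entireCoeffs_of_rec (solCoeff_rec k c₀ c₁)).summable_mul_pow y
  have he := hs.comp_injective (mul_right_injective₀ (two_ne_zero' ℕ))
  have ho := hs.comp_injective
    ((add_left_injective 1).comp (mul_right_injective₀ (two_ne_zero' ℕ)))
  have hodd : ∑' m, solCoeff k c₀ c₁ (2 * m + 1) * y ^ (2 * m + 1) =
      c₁ * y * M ((k + 1) / (2 * k)) (3 / 2) (y ^ 2 * k / 2) := by
    rw [M_eq_tsum, ← tsum_mul_left]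
    refine tsum_congr fun m => ?_
    rw [solCoeff_two_mul_add_one hk]
    ring
  have heven : ∑' m, solCoeff k c₀ c₁ (2 * m) * y ^ (2 * m) =
      c₀ * M (1 / (2 * k)) (1 / 2) (y ^ 2 * k / 2) := by
    rw [M_eq_tsum, ← tsum_mul_left]
    refine tsum_congr fun m => ?_
    rw [solCoeff_two_mul hk]
    ring
  rw [← tsum_even_add_odd (f := fun n => solCoeff k c₀ c₁ n * y ^ n) he ho, hodd, heven,
    add_comm]

theorem stmt_3 (α : ℝ) (hα : 1 / 2 < α) (C : ℝ) :
    ContDiff ℝ 2 (fun y => C * G α y) ∧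
    ∀ y : ℝ,
      deriv (deriv (fun y => C * G α y)) y - (2 * α - 1) * y * deriv (fun y => C * G α y) y -
        C * G α y = 0 := by
  set k := 2 * α - 1 with hk_def
  have hk : k ≠ 0 := by linarith
  have hγ : α / k = (k + 1) / (2 * k) := by rw [hk_def]; field_simp; ring
  have hγ' : α / k - 1 / 2 = 1 / (2 * k) := by rw [hγ]; field_simp; ring
  set Q := Real.Gamma (α / k - 1 / 2) / (Real.sqrt (2 * k) * Real.Gamma (α / k))
  have hG : ∀ y, C * G α y = ∑' n, solCoeff k (C * Q) C n * y ^ n := fun y => by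
    rw [tsum_solCoeff_mul_pow hk, G, ← hγ, ← hγ']
    ring
  simp only [hG]
  exact ⟨(entireCoeffs_of_rec (solCoeff_rec k (C * Q) C)).contDiff_tsum.of_le (by norm_cast),
    tsum_mul_pow_ode_of_rec (solCoeff_rec k (C * Q) C)⟩
end

section
/- Let α > 1/2, set γ(α) = α/(2α−1) and z(y,α) = y²(2α−1)/2, and let G(y,α) = y·M(γ(α), 3/2, z(y,α)) + [Γ(γ(α)−1/2) / (√(2(2α−1))·Γ(γ(α)))]·M(γ(α)−1/2, 1/2, z(y,α)). Then G(y,α) → 0 as y → −∞. -/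
open Real Filter Polynomial

open MeasureTheory Set Topology

/-!
For `a > 0` put `I_a(x) = ∫₀^∞ s^(2a-1) e^(xs - s²/2) ds`. Expanding `e^(xs)` and integrating
term by term against the Gaussian moments `∫₀^∞ s^(2c-1) e^(-s²/2) ds = 2^(c-1) Γ(c)`, then
splitting the series into even and odd powers of `x`, gives
`I_a(x) = 2^(a-1) Γ(a) M(a, 1/2, x²/2) + x 2^(a-1/2) Γ(a+1/2) M(a+1/2, 3/2, x²/2)`.
For `a = γ(α) - 1/2` and `x = y √(2α-1)` this exhibits `G(y, α)` as a positive multiple of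
`I_a(y √(2α-1))`, and `I_a(x) → 0` as `x → -∞` by dominated convergence.
-/

noncomputable def confluentTerm (γ β z : ℝ) (n : ℕ) : ℝ :=
  (ascPochhammer ℝ n).eval γ * z ^ n / ((ascPochhammer ℝ n).eval β * (n.factorial : ℝ))

section Confluent

variable {γ β : ℝ}

lemma confluentTerm_succ (hβ : 0 < β) (z : ℝ) (n : ℕ) :
    confluentTerm γ β z (n + 1) =
      confluentTerm γ β z n * ((γ + n) * z / ((β + n) * (n + 1))) := by
  have hβn : (ascPochhammer ℝ n).eval β ≠ 0 := (ascPochhammer_pos n β hβ).ne'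
  have hβn' : β + n ≠ 0 := by positivity
  simp only [confluentTerm, ascPochhammer_succ_eval, Nat.factorial_succ, pow_succ]
  push_cast
  field_simp

lemma summable_confluentTerm (hβ : 0 < β) (γ z : ℝ) : Summable (confluentTerm γ β z) := by
  refine summable_of_ratio_norm_eventually_le (r := 1 / 2) (by norm_num) ?_
  filter_upwards [eventually_ge_atTop ⌈2 * |z| * (|γ| + 1)⌉₊] with n hn
  have hn' : 2 * |z| * (|γ| + 1) ≤ n := Nat.ceil_le.1 hn
  have hγn : |γ + n| ≤ (|γ| + 1) * (n + 1) := by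
    have := abs_add_le γ n
    rw [Nat.abs_cast] at this
    nlinarith [abs_nonneg γ, Nat.cast_nonneg (α := ℝ) n]
  have hratio : |γ + n| * |z| / ((β + n) * (n + 1)) ≤ 1 / 2 := by
    rw [div_le_iff₀ (by positivity)]
    nlinarith [abs_nonneg z, abs_nonneg γ, Nat.cast_nonneg (α := ℝ) n]
  rw [confluentTerm_succ hβ, norm_mul, mul_comm (1 / 2)]
  refine mul_le_mul_of_nonneg_left ?_ (norm_nonneg _)
  rwa [Real.norm_eq_abs, abs_div, abs_mul, abs_mul, abs_of_pos (by positivity : 0 < β + n),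
    abs_of_pos (by positivity : (0 : ℝ) < n + 1)]

lemma hasSum_M (hβ : 0 < β) (γ z : ℝ) : HasSum (confluentTerm γ β z) (M γ β z) :=
  (summable_confluentTerm hβ γ z).hasSum

end Confluent

lemma Real.Gamma_add_nat_eq_mul_ascPochhammer {a : ℝ} (ha : 0 < a) (n : ℕ) :
    Gamma (a + n) = Gamma a * (ascPochhammer ℝ n).eval a := by
  induction n with
  | zero => simp
  | succ n ih =>
    rw [Nat.cast_succ, ← add_assoc, Gamma_add_one (by positivity), ih, ascPochhammer_succ_eval]
    ring

lemma ascPochhammer_eval_three_halves (m : ℕ) :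
    (ascPochhammer ℝ m).eval (3 / 2) = (2 * m + 1) * (ascPochhammer ℝ m).eval (1 / 2) := by
  induction m with
  | zero => simp
  | succ m ih =>
    rw [ascPochhammer_succ_eval, ascPochhammer_succ_eval, ih]
    push_cast
    ring

lemma factorial_two_mul_eq_ascPochhammer (m : ℕ) :
    ((2 * m).factorial : ℝ) = 4 ^ m * m.factorial * (ascPochhammer ℝ m).eval (1 / 2) := by
  induction m with
  | zero => simp
  | succ m ih =>
    rw [show 2 * (m + 1) = 2 * m + 1 + 1 by ring, Nat.factorial_succ, Nat.factorial_succ,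
      Nat.factorial_succ, ascPochhammer_succ_eval]
    push_cast
    rw [ih]
    ring

lemma factorial_two_mul_add_one_eq_ascPochhammer (m : ℕ) :
    ((2 * m + 1).factorial : ℝ) = 4 ^ m * m.factorial * (ascPochhammer ℝ m).eval (3 / 2) := by
  rw [Nat.factorial_succ, ascPochhammer_eval_three_halves]
  push_cast
  rw [factorial_two_mul_eq_ascPochhammer]
  ring

noncomputable def gaussMomentTerm (a x : ℝ) (n : ℕ) : ℝ :=
  x ^ n / n.factorial * (2 ^ (a + n / 2 - 1) * Gamma (a + n / 2))

section GaussMoment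

variable {a : ℝ}

lemma gaussMomentTerm_two_mul (ha : 0 < a) (x : ℝ) (m : ℕ) :
    gaussMomentTerm a x (2 * m) =
      2 ^ (a - 1) * Gamma a * confluentTerm a (1 / 2) (x ^ 2 / 2) m := by
  have hpoch : 0 < (ascPochhammer ℝ m).eval (1 / 2) := ascPochhammer_pos m _ (by norm_num)
  have h4 : (4 : ℝ) ^ m = 2 ^ m * 2 ^ m := by rw [← mul_pow]; norm_num
  rw [gaussMomentTerm, confluentTerm, show a + ((2 * m : ℕ) : ℝ) / 2 - 1 = a - 1 + m by
      push_cast; ring, show a + ((2 * m : ℕ) : ℝ) / 2 = a + m by push_cast; ring,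
    Real.Gamma_add_nat_eq_mul_ascPochhammer ha, rpow_add two_pos, rpow_natCast,
    factorial_two_mul_eq_ascPochhammer, pow_mul, div_pow, h4]
  field_simp

lemma gaussMomentTerm_two_mul_add_one (ha : 0 < a) (x : ℝ) (m : ℕ) :
    gaussMomentTerm a x (2 * m + 1) =
      x * 2 ^ (a - 1 / 2) * Gamma (a + 1 / 2) *
        confluentTerm (a + 1 / 2) (3 / 2) (x ^ 2 / 2) m := by
  have hpoch : 0 < (ascPochhammer ℝ m).eval (3 / 2) := ascPochhammer_pos m _ (by norm_num)
  have h4 : (4 : ℝ) ^ m = 2 ^ m * 2 ^ m := by rw [← mul_pow]; norm_num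
  rw [gaussMomentTerm, confluentTerm, show a + ((2 * m + 1 : ℕ) : ℝ) / 2 - 1 = a - 1 / 2 + m by
      push_cast; ring, show a + ((2 * m + 1 : ℕ) : ℝ) / 2 = a + 1 / 2 + m by push_cast; ring,
    Real.Gamma_add_nat_eq_mul_ascPochhammer (by positivity), rpow_add two_pos, rpow_natCast,
    factorial_two_mul_add_one_eq_ascPochhammer, pow_succ, pow_mul, div_pow, h4]
  field_simp

lemma hasSum_gaussMomentTerm (ha : 0 < a) (x : ℝ) :
    HasSum (gaussMomentTerm a x)
      (2 ^ (a - 1) * Gamma a * M a (1 / 2) (x ^ 2 / 2) +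
        x * 2 ^ (a - 1 / 2) * Gamma (a + 1 / 2) * M (a + 1 / 2) (3 / 2) (x ^ 2 / 2)) := by
  refine HasSum.even_add_odd ?_ ?_
  · simp only [gaussMomentTerm_two_mul ha]
    exact (hasSum_M (by norm_num) _ _).mul_left _
  · simp only [gaussMomentTerm_two_mul_add_one ha]
    exact (hasSum_M (by norm_num) _ _).mul_left _

end GaussMoment

-- Up to the factor `Γ(2a) e^(x²/4)` this is the parabolic cylinder function `D_{-2a}(-x)`.
noncomputable def parabolicCylinderIntegral (a x : ℝ) : ℝ :=
  ∫ s in Ioi 0, s ^ (2 * a - 1) * exp (x * s - s ^ 2 / 2)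

lemma integral_rpow_mul_exp_neg_sq_div_two {c : ℝ} (hc : 0 < c) :
    ∫ s in Ioi (0 : ℝ), s ^ (2 * c - 1) * exp (-s ^ 2 / 2) = 2 ^ (c - 1) * Gamma c := by
  have h := integral_rpow_mul_exp_neg_mul_rpow two_pos (by linarith : -1 < 2 * c - 1)
    (by norm_num : (0 : ℝ) < 1 / 2)
  rw [show (2 * c - 1 + 1) / 2 = c by ring, show -(2 * c - 1 + 1) / 2 = -c by ring,
    one_div, inv_rpow zero_le_two, ← rpow_neg zero_le_two, neg_neg] at h
  rw [rpow_sub_one two_ne_zero, div_eq_mul_inv, ← h]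
  refine setIntegral_congr_fun measurableSet_Ioi fun s _ => ?_
  rw [rpow_two]
  ring_nf

lemma integrableOn_rpow_mul_exp_mul_sub_sq_div_two {p : ℝ} (hp : -1 < p) (x : ℝ) :
    IntegrableOn (fun s => s ^ p * exp (x * s - s ^ 2 / 2)) (Ioi 0) := by
  have hbound : IntegrableOn (fun s => exp (x ^ 2) * (s ^ p * exp (-(1 / 4) * s ^ 2))) (Ioi 0) :=
    (integrableOn_rpow_mul_exp_neg_mul_sq (by norm_num) hp).const_mul _
  refine hbound.mono' (by fun_prop) ?_
  filter_upwards [ae_restrict_mem measurableSet_Ioi] with s (hs : 0 < s)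
  rw [norm_mul, norm_of_nonneg (rpow_nonneg hs.le p), norm_of_nonneg (exp_pos _).le,
    mul_left_comm, ← exp_add]
  gcongr
  nlinarith [sq_nonneg (x - s / 2)]

lemma hasSum_rpow_mul_exp_mul_sub_sq_div_two {s : ℝ} (hs : 0 < s) (p x : ℝ) :
    HasSum (fun n : ℕ => x ^ n / n.factorial * (s ^ (p + n) * exp (-s ^ 2 / 2)))
      (s ^ p * exp (x * s - s ^ 2 / 2)) := by
  have hexp := (NormedSpace.expSeries_div_hasSum_exp (x * s)).mul_left (s ^ p * exp (-s ^ 2 / 2))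
  rw [← Real.exp_eq_exp_ℝ, mul_assoc, ← exp_add, show -s ^ 2 / 2 + x * s = x * s - s ^ 2 / 2 by
    ring] at hexp
  have hterm : ∀ n : ℕ, x ^ n / n.factorial * (s ^ (p + n) * exp (-s ^ 2 / 2)) =
      s ^ p * exp (-s ^ 2 / 2) * ((x * s) ^ n / n.factorial) := fun n => by
    rw [rpow_add hs, rpow_natCast, mul_pow]
    ring
  simpa only [hterm] using hexp

section Integral

variable {a : ℝ}

lemma hasSum_parabolicCylinderIntegral (ha : 0 < a) (x : ℝ) :
    HasSum (gaussMomentTerm a x) (parabolicCylinderIntegral a x) := by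
  set F : ℝ → ℕ → ℝ → ℝ :=
    fun x n s => x ^ n / n.factorial * (s ^ (2 * a - 1 + n) * exp (-s ^ 2 / 2))
  have hexponent : ∀ n : ℕ, 2 * a - 1 + n = 2 * (a + n / 2) - 1 := fun n => by ring
  have hF_int : ∀ x n, IntegrableOn (F x n) (Ioi 0) := fun x n => by
    have := integrableOn_rpow_mul_exp_mul_sub_sq_div_two
      (by linarith [Nat.cast_nonneg (α := ℝ) n] : -1 < 2 * a - 1 + n) 0
    simp only [zero_mul, zero_sub, ← neg_div] at this
    exact this.const_mul _
  have hF_integral : ∀ x n, ∫ s in Ioi 0, F x n s = gaussMomentTerm a x n := fun x n => by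
    rw [integral_const_mul, hexponent, integral_rpow_mul_exp_neg_sq_div_two (by positivity),
      gaussMomentTerm]
  have hF_norm : ∀ n, ∫ s in Ioi 0, ‖F x n s‖ = gaussMomentTerm a |x| n := fun n => by
    rw [← hF_integral]
    refine setIntegral_congr_fun measurableSet_Ioi fun s (hs : 0 < s) => ?_
    rw [norm_mul, norm_of_nonneg (by positivity : 0 ≤ s ^ (2 * a - 1 + n) * exp (-s ^ 2 / 2)),
      norm_div, norm_pow, RCLike.norm_natCast, norm_eq_abs]
  -- The norms of the terms integrate to the same series at `|x|`, which converges.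
  have hsum := hasSum_integral_of_summable_integral_norm (μ := volume.restrict (Ioi 0))
    (hF_int x) (by simpa only [hF_norm] using (hasSum_gaussMomentTerm ha |x|).summable)
  simp only [hF_integral] at hsum
  rwa [parabolicCylinderIntegral, setIntegral_congr_fun measurableSet_Ioi fun s (hs : 0 < s) =>
    (hasSum_rpow_mul_exp_mul_sub_sq_div_two hs _ x).tsum_eq.symm]

lemma parabolicCylinderIntegral_eq (ha : 0 < a) (x : ℝ) :
    parabolicCylinderIntegral a x =
      2 ^ (a - 1) * Gamma a * M a (1 / 2) (x ^ 2 / 2) +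
        x * 2 ^ (a - 1 / 2) * Gamma (a + 1 / 2) * M (a + 1 / 2) (3 / 2) (x ^ 2 / 2) :=
  (hasSum_parabolicCylinderIntegral ha x).unique (hasSum_gaussMomentTerm ha x)

lemma tendsto_parabolicCylinderIntegral_atBot (ha : 0 < a) :
    Tendsto (parabolicCylinderIntegral a) atBot (𝓝 0) := by
  have hp : -1 < 2 * a - 1 := by linarith
  rw [← integral_zero ℝ ℝ]
  refine tendsto_integral_filter_of_dominated_convergence _
    (Eventually.of_forall fun x => (integrableOn_rpow_mul_exp_mul_sub_sq_div_two hp x).1)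
    ?_ (integrableOn_rpow_mul_exp_mul_sub_sq_div_two hp 0) ?_
  · filter_upwards [eventually_le_atBot 0] with x hx
    filter_upwards [ae_restrict_mem measurableSet_Ioi] with s (hs : 0 < s)
    rw [norm_mul, norm_of_nonneg (rpow_nonneg hs.le _), norm_of_nonneg (exp_pos _).le]
    gcongr
  · filter_upwards [ae_restrict_mem measurableSet_Ioi] with s (hs : 0 < s)
    have hexp : Tendsto (fun x => exp (x * s - s ^ 2 / 2)) atBot (𝓝 0) :=
      tendsto_exp_atBot.comp
        (tendsto_atBot_add_const_right _ _ (tendsto_id.atBot_mul_const hs))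
    simpa using hexp.const_mul (s ^ (2 * a - 1))

end Integral

lemma mul_M_add_Gamma_div_mul_M_eq {γ b : ℝ} (hγ : 1 / 2 < γ) (hb : 0 < b) (y : ℝ) :
    y * M γ (3 / 2) (y ^ 2 * b / 2) +
        Gamma (γ - 1 / 2) / (√(2 * b) * Gamma γ) * M (γ - 1 / 2) (1 / 2) (y ^ 2 * b / 2) =
      parabolicCylinderIntegral (γ - 1 / 2) (y * √b) / (√b * 2 ^ (γ - 1) * Gamma γ) := by
  have hΓ : 0 < Gamma γ := Gamma_pos_of_pos (by linarith)
  have hsb : 0 < √b := sqrt_pos.2 hb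
  have hs2 : 0 < √2 := sqrt_pos.2 two_pos
  have hx : (y * √b) ^ 2 / 2 = y ^ 2 * b / 2 := by rw [mul_pow, sq_sqrt hb.le]
  have h2pow : (2 : ℝ) ^ (γ - 1) = 2 ^ (γ - 1 / 2 - 1) * √2 := by
    rw [sqrt_eq_rpow, ← rpow_add two_pos]
    ring_nf
  rw [parabolicCylinderIntegral_eq (by linarith), hx, sub_add_cancel,
    show γ - 1 / 2 - 1 / 2 = γ - 1 by ring, sqrt_mul zero_le_two, h2pow]
  field_simp
  ring

theorem stmt_4 (α : ℝ) (hα : 1 / 2 < α) :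
    Tendsto (fun y => G α y) atBot (nhds 0) := by
  have hb : 0 < 2 * α - 1 := by linarith
  have hγ : 1 / 2 < α / (2 * α - 1) := by rw [lt_div_iff₀ hb]; linarith
  simp only [G, mul_M_add_Gamma_div_mul_M_eq hγ hb]
  have hscale : Tendsto (fun y => y * √(2 * α - 1)) atBot atBot :=
    tendsto_id.atBot_mul_const (sqrt_pos.2 hb)
  simpa using ((tendsto_parabolicCylinderIntegral_atBot (by linarith)).comp hscale).div_const _
end
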